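/- Stability is preserved under enlarging the subset: if Y ⊆ X ⊆ S with Y nonempty, ε ≥ 0, and ina(Y) − ina(Y ∪ {s}) ≤ ε for every s ∈ S \ Y, then ina(X) − ina(X ∪ {s}) ≤ ε for every s ∈ S \ X. -/
import Mathlib


open Finset

/-- Number of ones in a binary string. -/
def onesCount {m : ℕ} (x : Fin m → Bool) : ℕ :=
  (Finset.univ.filter fun j => x j = true).card

/-- The maximal Hamming distance from `x` to a vote. -/
def maxDist {n m : ℕ} (s : Fin n → Fin m → Bool) (x : Fin m → Bool) : ℕ :=
  Finset.univ.sup fun i => hammingDist x (s i)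

/-- The string `t(Y)`: the optimal solution overwritten at positions where all
strings of `Y` agree. -/
def tfun {m : ℕ} (sOPT : Fin m → Bool) (Y : Finset (Fin m → Bool)) : Fin m → Bool :=
  fun j =>
    if ∀ y ∈ Y, y j = false then false
    else if ∀ y ∈ Y, y j = true then true
    else sOPT j

/-- The inaccuracy of a subset of votes. -/
def ina {m : ℕ} (sOPT : Fin m → Bool) (Y : Finset (Fin m → Bool)) : ℕ :=
  hammingDist (tfun sOPT Y) sOPT

lemma tfun_ne_iff {m : ℕ} (sOPT : Fin m → Bool) {Z : Finset (Fin m → Bool)}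
    (hZ : Z.Nonempty) (j : Fin m) :
    tfun sOPT Z j ≠ sOPT j ↔ ∀ z ∈ Z, z j = !sOPT j := by
  obtain ⟨z0, hz0⟩ := hZ
  unfold tfun
  split_ifs with h1 h2
  · cases hs : sOPT j <;> simp_all <;> exact ⟨z0, hz0⟩
  · cases hs : sOPT j <;> simp_all
  · constructor
    · intro h; exact absurd rfl h
    · intro h
      cases hs : sOPT j
      · exact absurd (fun z hz => by rw [h z hz, hs]; rfl) h2
      · exact absurd (fun z hz => by rw [h z hz, hs]; rfl) h1

lemma ina_eq {m : ℕ} (sOPT : Fin m → Bool) (Z : Finset (Fin m → Bool)) :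
    ina sOPT Z = (Finset.univ.filter fun j => tfun sOPT Z j ≠ sOPT j).card := rfl

/-- Stability is preserved under enlarging the subset: if `Y ⊆ X ⊆ S` with `Y`
nonempty, `ε ≥ 0`, and `ina(Y) − ina(Y ∪ {v}) ≤ ε` for every `v ∈ S \ Y`, then
`ina(X) − ina(X ∪ {v}) ≤ ε` for every `v ∈ S \ X`. -/
theorem stable_of_superset {n m k : ℕ} (hkm : k ≤ m) (hn : 0 < n)
    (s : Fin n → Fin m → Bool) (hinj : Function.Injective s)
    (OPT : ℕ) (sOPT : Fin m → Bool)
    (hk : onesCount sOPT = k)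
    (hOPT : maxDist s sOPT = OPT)
    (hmin : ∀ x : Fin m → Bool, onesCount x = k → OPT ≤ maxDist s x)
    (Y X : Finset (Fin m → Bool)) (hYne : Y.Nonempty) (hYX : Y ⊆ X)
    (hXS : X ⊆ Finset.image s Finset.univ)
    (ε : ℝ) (hε : 0 ≤ ε)
    (hstab : ∀ v ∈ Finset.image s Finset.univ \ Y,
      (ina sOPT Y : ℝ) - ina sOPT (Y ∪ {v}) ≤ ε) :
    ∀ v ∈ Finset.image s Finset.univ \ X,
      (ina sOPT X : ℝ) - ina sOPT (X ∪ {v}) ≤ ε := by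
  intro v hv
  have hXne : X.Nonempty := hYne.mono hYX
  have hvS : v ∈ Finset.image s Finset.univ := (Finset.mem_sdiff.1 hv).1
  have hvX : v ∉ X := (Finset.mem_sdiff.1 hv).2
  have hvY : v ∉ Y := fun h => hvX (hYX h)
  have hstabY := hstab v (Finset.mem_sdiff.2 ⟨hvS, hvY⟩)
  set AY := Finset.univ.filter fun j => tfun sOPT Y j ≠ sOPT j with hAY
  set AYv := Finset.univ.filter fun j => tfun sOPT (Y ∪ {v}) j ≠ sOPT j with hAYv
  set AX := Finset.univ.filter fun j => tfun sOPT X j ≠ sOPT j with hAX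
  set AXv := Finset.univ.filter fun j => tfun sOPT (X ∪ {v}) j ≠ sOPT j with hAXv
  have hYuv : (Y ∪ {v}).Nonempty := hYne.mono Finset.subset_union_left
  have hXuv : (X ∪ {v}).Nonempty := hXne.mono Finset.subset_union_left
  -- subset facts
  have hsubX : AXv ⊆ AX := by
    intro j hj
    simp only [hAXv, hAX, Finset.mem_filter, Finset.mem_univ, true_and] at *
    rw [tfun_ne_iff sOPT hXuv] at hj
    rw [tfun_ne_iff sOPT hXne]
    exact fun z hz => hj z (Finset.mem_union_left _ hz)
  have hsubY : AYv ⊆ AY := by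
    intro j hj
    simp only [hAYv, hAY, Finset.mem_filter, Finset.mem_univ, true_and] at *
    rw [tfun_ne_iff sOPT hYuv] at hj
    rw [tfun_ne_iff sOPT hYne]
    exact fun z hz => hj z (Finset.mem_union_left _ hz)
  have hsdiff : AX \ AXv ⊆ AY \ AYv := by
    intro j hj
    rw [Finset.mem_sdiff] at hj ⊢
    obtain ⟨hj1, hj2⟩ := hj
    simp only [hAX, hAXv, Finset.mem_filter, Finset.mem_univ, true_and] at hj1 hj2
    rw [tfun_ne_iff sOPT hXne] at hj1
    rw [tfun_ne_iff sOPT hXuv] at hj2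
    push_neg at hj2
    obtain ⟨z, hz, hzj⟩ := hj2
    rcases Finset.mem_union.1 hz with hz' | hz'
    · exact absurd (hj1 z hz') hzj
    · have hvj : v j ≠ !sOPT j := by
        rw [Finset.mem_singleton.1 hz'] at hzj; exact hzj
      constructor
      · simp only [hAY, Finset.mem_filter, Finset.mem_univ, true_and]
        rw [tfun_ne_iff sOPT hYne]
        exact fun z hz => hj1 z (hYX hz)
      · simp only [hAYv, Finset.mem_filter, Finset.mem_univ, true_and]
        rw [tfun_ne_iff sOPT hYuv]
        push_neg
        exact ⟨v, Finset.mem_union_right _ (Finset.mem_singleton_self v), hvj⟩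
  have hcardX : (AX \ AXv).card + AXv.card = AX.card :=
    Finset.card_sdiff_add_card_eq_card hsubX
  have hcardY : (AY \ AYv).card + AYv.card = AY.card :=
    Finset.card_sdiff_add_card_eq_card hsubY
  have hle : (AX \ AXv).card ≤ (AY \ AYv).card := Finset.card_le_card hsdiff
  have key : AX.card + AYv.card ≤ AY.card + AXv.card := by omega
  have e1 : ina sOPT X = AX.card := rfl
  have e2 : ina sOPT (X ∪ {v}) = AXv.card := rfl
  have e3 : ina sOPT Y = AY.card := rfl
  have e4 : ina sOPT (Y ∪ {v}) = AYv.card := rfl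
  rw [e1, e2]
  rw [e3, e4] at hstabY
  have : (AX.card : ℝ) + AYv.card ≤ AY.card + AXv.card := by exact_mod_cast key
  linarith
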